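/- The coefficients c(n) = C(x,n)·Σ_{k=0}^{n} C(n,k)·(-1)^{n-k+1}·σ^{-2}·ln(1 + σ²μ(x-k)) are strictly positive for every 1 ≤ n ≤ x. -/

import Mathlib

/-!
With `a = σ²μ`, reflecting `k ↦ n - k` turns the sum into `(-1)^(n+1) σ⁻² Δₐⁿ log` evaluated at
`1 + a(x - n) > 0`, where `Δₐ` is the forward difference with step `a`. An `m`-th forward
difference is positive wherever the `m`-th derivative is: `(Δᵐ f)' = Δᵐ f'`, so by induction
`Δᵐ f` is strictly increasing and `Δᵐ⁺¹ f = Δ (Δᵐ f) > 0`. The `n`-th derivative of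
`(-1)^(n+1) log` is `(n-1)! / yⁿ > 0`.
-/

open Finset fwdDiff

theorem hasDerivAt_fwdDiff_iter {F : Type*} [NormedAddCommGroup F] [NormedSpace ℝ F]
    {c h : ℝ} {f f' : ℝ → F} (hh : 0 ≤ h) (hf : ∀ y > c, HasDerivAt f (f' y) y) (m : ℕ) :
    ∀ y > c, HasDerivAt (Δ_[h] ^[m] f) (Δ_[h] ^[m] f' y) y := by
  induction m with
  | zero => exact hf
  | succ m ih =>
    intro y hy
    rw [Function.iterate_succ_apply', Function.iterate_succ_apply']
    exact ((ih (y + h) (by linarith)).comp_add_const y h).sub (ih y hy)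

theorem fwdDiff_iter_pos_of_iter_deriv_pos {c h : ℝ} (hh : 0 < h) {m : ℕ} {f : ℝ → ℝ}
    (hf : ∀ k < m, ∀ y > c, DifferentiableAt ℝ (deriv^[k] f) y)
    (hpos : ∀ y > c, 0 < deriv^[m] f y) {y : ℝ} (hy : c < y) :
    0 < Δ_[h] ^[m] f y := by
  induction m generalizing f y with
  | zero => exact hpos y hy
  | succ m ih =>
    have hderiv : ∀ z > c, HasDerivAt (Δ_[h] ^[m] f) (Δ_[h] ^[m] (deriv f) z) z :=
      hasDerivAt_fwdDiff_iter hh.le (fun z hz => (hf 0 m.succ_pos z hz).hasDerivAt) m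
    have hderiv_pos : ∀ z > c, 0 < Δ_[h] ^[m] (deriv f) z := fun z hz =>
      ih (fun k hk => by simpa only [← Function.iterate_succ_apply] using hf (k + 1) (by omega))
        (fun w hw => by simpa only [← Function.iterate_succ_apply] using hpos w hw) hz
    have hmono : StrictMonoOn (Δ_[h] ^[m] f) (Set.Ioi c) :=
      strictMonoOn_of_hasDerivWithinAt_pos (convex_Ioi c)
        (fun z hz => (hderiv z hz).continuousAt.continuousWithinAt)
        (fun z hz => by
          rw [interior_Ioi] at hz ⊢
          exact (hderiv z hz).hasDerivWithinAt)
        (fun z hz => hderiv_pos z (by rwa [interior_Ioi] at hz))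
    rw [Function.iterate_succ_apply', fwdDiff, sub_pos]
    exact hmono hy (show c < y + h by linarith) (lt_add_of_pos_right y hh)

theorem iter_deriv_const_mul_field (r : ℝ) (f : ℝ → ℝ) (k : ℕ) :
    deriv^[k] (fun y => r * f y) = fun y => r * deriv^[k] f y := by
  induction k with
  | zero => rfl
  | succ k ih =>
    rw [Function.iterate_succ_apply', ih, deriv_const_mul_field', Function.iterate_succ_apply']

theorem iter_deriv_log_succ (k : ℕ) :
    deriv^[k + 1] Real.log = fun x : ℝ => (-1) ^ k * (k.factorial : ℝ) * x ^ (-1 - k : ℤ) := by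
  rw [Function.iterate_succ_apply, Real.deriv_log', iter_deriv_inv']

theorem neg_one_pow_mul_fwdDiff_iter_log_pos {a t : ℝ} (ha : 0 < a) (ht : 0 < t) (m : ℕ) :
    0 < (-1) ^ m * Δ_[a] ^[m + 1] Real.log t := by
  have hsmul : (-1) ^ m * Δ_[a] ^[m + 1] Real.log t
      = Δ_[a] ^[m + 1] (fun y => (-1) ^ m * Real.log y) t := by
    rw [show (fun y => (-1) ^ m * Real.log y) = ((-1 : ℝ) ^ m) • Real.log from rfl,
      fwdDiff_iter_const_smul]
    rfl
  rw [hsmul]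
  refine fwdDiff_iter_pos_of_iter_deriv_pos ha (fun k _ y hy => ?_) (fun y hy => ?_) ht
  · rw [iter_deriv_const_mul_field]
    rcases k with _ | k
    · exact (Real.differentiableAt_log hy.ne').const_mul _
    · rw [iter_deriv_log_succ]
      exact ((differentiableAt_zpow.2 (Or.inl hy.ne')).const_mul _).const_mul _
  · rw [iter_deriv_const_mul_field, iter_deriv_log_succ]
    beta_reduce
    rw [← mul_assoc, ← mul_assoc, ← pow_add, Even.neg_one_pow ⟨m, rfl⟩, one_mul]
    have := zpow_pos hy (-1 - m : ℤ)
    positivity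

theorem sum_choose_mul_neg_one_pow_sub_eq_fwdDiff_iter (f : ℝ → ℝ) (s a : ℝ) (n : ℕ) :
    ∑ k ∈ range (n + 1), (n.choose k : ℝ) * (-1) ^ (n - k + 1) * f (s - k * a)
      = (-1) ^ (n + 1) * Δ_[a] ^[n] f (s - n * a) := by
  rw [fwdDiff_iter_eq_sum_shift, mul_sum, ← sum_range_reflect]
  refine sum_congr rfl fun k hk => ?_
  obtain ⟨j, rfl⟩ := Nat.exists_eq_add_of_le (Nat.lt_succ_iff.mp (mem_range.mp hk))
  rw [Nat.add_sub_cancel, Nat.add_sub_cancel_left, Nat.choose_symm_add, zsmul_eq_mul]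
  have hsign : (-1 : ℝ) ^ (k + 1) = (-1) ^ (k + j + 1) * (-1) ^ j := by
    rw [add_right_comm, pow_add _ (k + 1) j, mul_assoc, ← pow_add, ← two_mul, pow_mul,
      neg_one_sq, one_pow, mul_one]
  push_cast
  rw [Nat.add_sub_cancel, hsign, nsmul_eq_mul, show s - (k + j) * a + k * a = s - j * a by ring]
  ring

theorem jump_rates_positive_general (x : ℕ) (μ σ : ℝ) (hμ : 0 < μ) (hσ : 0 < σ)
    (n : ℕ) (hn1 : 1 ≤ n) (hnx : n ≤ x) :
    0 < (x.choose n : ℝ) * ∑ k ∈ range (n + 1),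
        (n.choose k : ℝ) * (-1 : ℝ) ^ (n - k + 1) *
          (Real.log (1 + σ ^ 2 * μ * ((x : ℝ) - k)) / σ ^ 2) := by
  obtain ⟨m, rfl⟩ := Nat.exists_eq_add_of_le' hn1
  set a := σ ^ 2 * μ
  have ha : 0 < a := by positivity
  have hsum : ∑ k ∈ range (m + 1 + 1), ((m + 1).choose k : ℝ) * (-1 : ℝ) ^ (m + 1 - k + 1) *
        (Real.log (1 + a * ((x : ℝ) - k)) / σ ^ 2)
      = (-1) ^ m * Δ_[a] ^[m + 1] Real.log (1 + a * x - (m + 1 : ℕ) * a) / σ ^ 2 := by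
    have hsign : (-1 : ℝ) ^ (m + 1 + 1) = (-1) ^ m := by ring
    rw [div_eq_mul_inv, mul_comm, ← hsign, ← sum_choose_mul_neg_one_pow_sub_eq_fwdDiff_iter,
      mul_sum]
    refine sum_congr rfl fun k _ => ?_
    ring_nf
  have ht : 0 < 1 + a * x - (m + 1 : ℕ) * a := by
    have hmx : ((m + 1 : ℕ) : ℝ) ≤ x := by exact_mod_cast hnx
    nlinarith [mul_nonneg ha.le (sub_nonneg.2 hmx)]
  have hlog := neg_one_pow_mul_fwdDiff_iter_log_pos ha ht m
  have hchoose := Nat.choose_pos hnx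
  rw [hsum]
  positivity

/-- The jump rates `c(n) = C(x,n) ∑_{k=0}^n C(n,k) (-1)^(n-k+1) σ⁻² ln(1+σ²μ(x-k))`
of Theorem A.2 are strictly positive for every `1 ≤ n ≤ x`. -/
theorem jump_rates_positive (x : ℕ) (hx : 1 ≤ x) (μ σ : ℝ) (hμ : 0 < μ) (hσ : 0 < σ)
    (n : ℕ) (hn1 : 1 ≤ n) (hnx : n ≤ x) :
    0 < (x.choose n : ℝ) * ∑ k ∈ range (n + 1),
        (n.choose k : ℝ) * (-1 : ℝ) ^ (n - k + 1) *
          (Real.log (1 + σ ^ 2 * μ * ((x : ℝ) - k)) / σ ^ 2) :=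
  jump_rates_positive_general x μ σ hμ hσ n hn1 hnx
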